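/- Assume either (a) the infimum of R over probability measures on ℝ^D is attained at some probability measure ρ* satisfying ∫ U(θ,θ) ρ*(dθ) ≤ K, or (b) there exists ε₀ > 0 such that every probability measure ρ on ℝ^D with R(ρ) ≤ inf_ρ R(ρ) + ε₀ satisfies ∫ U(θ,θ) ρ(dθ) ≤ K. Then | inf over θ ∈ (ℝ^D)^N of R_N(θ) − inf over probability measures ρ of R(ρ) | ≤ K/N. -/

import Mathlib

/-!
`R_N(θ)` is the asymptotic risk of the empirical measure of `θ`, so `inf R ≤ inf R_N`.
Conversely, if `θ₁, …, θ_N` are i.i.d. with law `ρ`, only the `N` diagonal terms of the double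
sum in `R_N` differ in mean from `R(ρ)`, which gives
`𝔼 R_N(θ) = R(ρ) + (∫ U(θ,θ) dρ - ∫∫ U dρ dρ) / N`. Since
`∫∫ U dρ dρ = 𝔼ₓ[(∫ f(x,θ) ρ(dθ))²] ≥ 0`, some `θ` has `R_N(θ) ≤ R(ρ) + K/N` as soon as
`∫ U(θ,θ) dρ ≤ K`, and each of (a), (b) provides such `ρ` with `R(ρ)` arbitrarily close to `inf R`.
-/

open MeasureTheory

noncomputable section

/-- `R# = 𝔼[y²]`. -/
def Rhash {d : ℕ} (P : Measure ((Fin d → ℝ) × ℝ)) : ℝ := ∫ p, p.2 ^ 2 ∂P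

/-- `V(θ) = -𝔼[y f(x,θ)]`. -/
def Vpot {d D : ℕ} (P : Measure ((Fin d → ℝ) × ℝ))
    (f : (Fin d → ℝ) → (Fin D → ℝ) → ℝ) (θ : Fin D → ℝ) : ℝ :=
  - ∫ p, p.2 * f p.1 θ ∂P

/-- `U(θ,θ') = 𝔼[f(x,θ) f(x,θ')]`. -/
def Upot {d D : ℕ} (P : Measure ((Fin d → ℝ) × ℝ))
    (f : (Fin d → ℝ) → (Fin D → ℝ) → ℝ) (θ θ' : Fin D → ℝ) : ℝ :=
  ∫ p, f p.1 θ * f p.1 θ' ∂P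

/-- Asymptotic (mean-field) risk `R(ρ)`. -/
def Risk {d D : ℕ} (P : Measure ((Fin d → ℝ) × ℝ))
    (f : (Fin d → ℝ) → (Fin D → ℝ) → ℝ) (ρ : Measure (Fin D → ℝ)) : ℝ :=
  Rhash P + 2 * ∫ θ, Vpot P f θ ∂ρ + ∫ θ, ∫ θ', Upot P f θ θ' ∂ρ ∂ρ

/-- Finite-`N` risk `R_N(θ)`. -/
def RiskN {d D : ℕ} (P : Measure ((Fin d → ℝ) × ℝ))
    (f : (Fin d → ℝ) → (Fin D → ℝ) → ℝ) (N : ℕ) (θ : Fin N → Fin D → ℝ) : ℝ :=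
  Rhash P + (2 / (N : ℝ)) * ∑ i, Vpot P f (θ i)
    + (1 / (N : ℝ) ^ 2) * ∑ i, ∑ j, Upot P f (θ i) (θ j)

open ProbabilityTheory
open scoped ENNReal

theorem MeasureTheory.MeasurePreserving.integral_comp_of_aestronglyMeasurable
    {α β : Type*} [MeasurableSpace α] [MeasurableSpace β] {μ : Measure α} {ν : Measure β}
    {E : Type*} [NormedAddCommGroup E] [NormedSpace ℝ E] {φ : α → β}
    (hφ : MeasurePreserving φ μ ν) {g : β → E} (hg : AEStronglyMeasurable g ν) :
    ∫ x, g (φ x) ∂μ = ∫ y, g y ∂ν := by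
  rw [← hφ.map_eq] at hg ⊢
  exact (integral_map hφ.measurable.aemeasurable hg).symm

section IIDSample

variable {Θ ι : Type*} [MeasurableSpace Θ] [Fintype ι] (ρ : Measure Θ) [IsProbabilityMeasure ρ]

theorem measurePreserving_eval_pair {i j : ι} (hij : i ≠ j) :
    MeasurePreserving (fun θ : ι → Θ => (θ i, θ j)) (Measure.pi fun _ => ρ) (ρ.prod ρ) := by
  refine ⟨(measurable_pi_apply i).prodMk (measurable_pi_apply j), ?_⟩
  have hindep := (iIndepFun_pi (μ := fun _ : ι => ρ) (X := fun _ => id)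
    fun _ => aemeasurable_id).indepFun hij
  rw [(indepFun_iff_map_prod_eq_prod_map_map (measurable_pi_apply i).aemeasurable
    (measurable_pi_apply j).aemeasurable).1 hindep, (measurePreserving_eval _ i).map_eq,
    (measurePreserving_eval _ j).map_eq]

variable {ρ} {G : Θ → Θ → ℝ}

theorem integrable_comp_eval_pair (hG : Integrable (Function.uncurry G) (ρ.prod ρ))
    (hGdiag : Integrable (fun θ => G θ θ) ρ) (i j : ι) :
    Integrable (fun θ : ι → Θ => G (θ i) (θ j)) (Measure.pi fun _ => ρ) := by
  by_cases hij : i = j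
  · subst hij
    exact (measurePreserving_eval (fun _ : ι => ρ) i).integrable_comp_of_integrable hGdiag
  · exact (measurePreserving_eval_pair ρ hij).integrable_comp_of_integrable hG

theorem integral_comp_eval_pair [DecidableEq ι] (hG : Integrable (Function.uncurry G) (ρ.prod ρ))
    (hGdiag : Integrable (fun θ => G θ θ) ρ) (i j : ι) :
    ∫ θ : ι → Θ, G (θ i) (θ j) ∂(Measure.pi fun _ => ρ)
      = if i = j then ∫ θ, G θ θ ∂ρ else ∫ θ, ∫ θ', G θ θ' ∂ρ ∂ρ := by
  split_ifs with hij
  · subst hij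
    exact (measurePreserving_eval (fun _ : ι => ρ) i).integral_comp_of_aestronglyMeasurable
      (g := fun θ => G θ θ) hGdiag.aestronglyMeasurable
  · exact ((measurePreserving_eval_pair ρ hij).integral_comp_of_aestronglyMeasurable
      (g := Function.uncurry G) hG.aestronglyMeasurable).trans (integral_prod _ hG)

theorem integral_sum_sum_comp_eval_pair (hG : Integrable (Function.uncurry G) (ρ.prod ρ))
    (hGdiag : Integrable (fun θ => G θ θ) ρ) :
    ∫ θ : ι → Θ, ∑ i, ∑ j, G (θ i) (θ j) ∂(Measure.pi fun _ => ρ)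
      = Fintype.card ι * (∫ θ, G θ θ ∂ρ - ∫ θ, ∫ θ', G θ θ' ∂ρ ∂ρ)
        + Fintype.card ι ^ 2 * ∫ θ, ∫ θ', G θ θ' ∂ρ ∂ρ := by
  classical
  have hint := integrable_comp_eval_pair hG hGdiag (ι := ι)
  rw [integral_finsetSum _ fun i _ => integrable_finsetSum _ fun j _ => hint i j]
  simp_rw [integral_finsetSum _ fun j _ => hint _ j, integral_comp_eval_pair hG hGdiag]
  set A := ∫ θ, G θ θ ∂ρ
  set B := ∫ θ, ∫ θ', G θ θ' ∂ρ ∂ρ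
  have hsplit (i j : ι) : (if i = j then A else B) = B + if i = j then A - B else 0 := by
    split_ifs <;> ring
  simp only [hsplit, Finset.sum_add_distrib, Finset.sum_ite_eq, Finset.mem_univ, if_true,
    Finset.sum_const, Finset.card_univ, nsmul_eq_mul]
  ring

theorem integrable_comp_eval {g : Θ → ℝ} (hg : Integrable g ρ) (i : ι) :
    Integrable (fun θ : ι → Θ => g (θ i)) (Measure.pi fun _ => ρ) :=
  (measurePreserving_eval (fun _ : ι => ρ) i).integrable_comp_of_integrable hg

theorem integral_sum_comp_eval {g : Θ → ℝ} (hg : Integrable g ρ) :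
    ∫ θ : ι → Θ, ∑ i, g (θ i) ∂(Measure.pi fun _ => ρ) = Fintype.card ι * ∫ θ, g θ ∂ρ := by
  rw [integral_finsetSum _ fun i _ => integrable_comp_eval hg i]
  simp_rw [fun i => (measurePreserving_eval (fun _ : ι => ρ) i
    ).integral_comp_of_aestronglyMeasurable hg.aestronglyMeasurable]
  simp

end IIDSample

section EmpiricalMeasure

variable {Θ ι : Type*} [MeasurableSpace Θ] [Fintype ι]

def empiricalMeasure (θ : ι → Θ) : Measure Θ :=
  (Fintype.card ι : ℝ≥0∞)⁻¹ • ∑ i, Measure.dirac (θ i)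

instance isProbabilityMeasure_empiricalMeasure [Nonempty ι] (θ : ι → Θ) :
    IsProbabilityMeasure (empiricalMeasure θ) := by
  constructor
  simp [empiricalMeasure, ENNReal.inv_mul_cancel]

theorem integral_empiricalMeasure [MeasurableSingletonClass Θ] (θ : ι → Θ) (g : Θ → ℝ) :
    ∫ x, g x ∂empiricalMeasure θ = (Fintype.card ι : ℝ)⁻¹ * ∑ i, g (θ i) := by
  rw [empiricalMeasure, integral_smul_measure, integral_finsetSum_measure fun i _ =>
    (integrable_const (g (θ i))).congr (ae_eq_dirac g).symm]
  simp [ENNReal.toReal_inv]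

end EmpiricalMeasure

theorem integral_integral_integral_mul_eq_integral_sq {α Θ : Type*} [MeasurableSpace α]
    [MeasurableSpace Θ] {μ : Measure α} {ν : Measure Θ} [IsFiniteMeasure μ] [IsFiniteMeasure ν]
    {g : Θ → α → ℝ} (hg : Measurable (Function.uncurry g)) {C : ℝ} (hC : ∀ θ a, |g θ a| ≤ C) :
    ∫ θ, ∫ θ', ∫ a, g θ a * g θ' a ∂μ ∂ν ∂ν = ∫ a, (∫ θ, g θ a ∂ν) ^ 2 ∂μ := by
  set G : α → ℝ := fun a => ∫ θ, g θ a ∂ν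
  have hG_meas : StronglyMeasurable G := hg.stronglyMeasurable.integral_prod_left'
  have hG_bdd (a : α) : ‖G a‖ ≤ C * ν.real Set.univ :=
    norm_integral_le_of_norm_le_const (ae_of_all _ fun θ => hC θ a)
  have hmul_g (θ : Θ) : Integrable (fun q : Θ × α => g θ q.2 * g q.1 q.2) (ν.prod μ) :=
    .of_bound (((hg.comp (measurable_const.prodMk measurable_snd)).mul hg).aestronglyMeasurable)
      (C * C) (ae_of_all _ fun q => by
        rw [Real.norm_eq_abs, abs_mul]
        exact mul_le_mul (hC _ _) (hC _ _) (abs_nonneg _) ((abs_nonneg _).trans (hC θ q.2)))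
  have hmul_G : Integrable (fun q : Θ × α => g q.1 q.2 * G q.2) (ν.prod μ) :=
    .of_bound
      ((hg.stronglyMeasurable.mul (hG_meas.comp_measurable measurable_snd)).aestronglyMeasurable)
      (C * (C * ν.real Set.univ)) (ae_of_all _ fun q => by
        rw [norm_mul, Real.norm_eq_abs]
        exact mul_le_mul (hC _ _) (hG_bdd _) (norm_nonneg _) ((abs_nonneg _).trans (hC q.1 q.2)))
  have hinner (θ : Θ) : ∫ θ', ∫ a, g θ a * g θ' a ∂μ ∂ν = ∫ a, g θ a * G a ∂μ := by
    rw [integral_integral_swap (hmul_g θ)]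
    simp_rw [integral_const_mul]
    rfl
  calc ∫ θ, ∫ θ', ∫ a, g θ a * g θ' a ∂μ ∂ν ∂ν = ∫ θ, ∫ a, g θ a * G a ∂μ ∂ν := by
        simp_rw [hinner]
    _ = ∫ a, ∫ θ, g θ a * G a ∂ν ∂μ := integral_integral_swap hmul_G
    _ = ∫ a, G a ^ 2 ∂μ := by simp_rw [integral_mul_const, sq]; rfl

theorem exists_le_ciInf_add_of_minimizer_or_sublevel {ι : Type*} [Nonempty ι] {F : ι → ℝ}
    {Q : ι → Prop} (h : (∃ i, F i = ⨅ j, F j ∧ Q i) ∨ ∃ ε₀ > 0, ∀ i, F i ≤ (⨅ j, F j) + ε₀ → Q i)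
    {ε : ℝ} (hε : 0 < ε) : ∃ i, Q i ∧ F i ≤ (⨅ j, F j) + ε := by
  rcases h with ⟨i, hmin, hQ⟩ | ⟨ε₀, hε₀, hsub⟩
  · exact ⟨i, hQ, by linarith⟩
  · obtain ⟨i, hi⟩ := exists_lt_of_ciInf_lt (lt_add_of_pos_right (⨅ j, F j) (lt_min hε hε₀))
    exact ⟨i, hsub i (hi.le.trans (by gcongr; exact min_le_right _ _)),
      hi.le.trans (by gcongr; exact min_le_left _ _)⟩

section Risk

variable {d D : ℕ} (P : Measure ((Fin d → ℝ) × ℝ)) (f : (Fin d → ℝ) → (Fin D → ℝ) → ℝ) {C : ℝ}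

theorem Upot_self_nonneg (θ : Fin D → ℝ) : 0 ≤ Upot P f θ θ :=
  integral_nonneg fun _ => mul_self_nonneg _

theorem RiskN_eq_Risk_empiricalMeasure {N : ℕ} [NeZero N] (θ : Fin N → Fin D → ℝ) :
    RiskN P f N θ = Risk P f (empiricalMeasure θ) := by
  simp only [Risk, RiskN, integral_empiricalMeasure, Fintype.card_fin, ← Finset.mul_sum]
  field_simp

theorem stronglyMeasurable_Vpot [SFinite P]
    (hf_meas : Measurable (fun p : (Fin d → ℝ) × (Fin D → ℝ) => f p.1 p.2)) :
    StronglyMeasurable (Vpot P f) :=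
  (measurable_snd.snd.mul (hf_meas.comp (measurable_snd.fst.prodMk measurable_fst))
    ).stronglyMeasurable.integral_prod_right'.neg

theorem stronglyMeasurable_uncurry_Upot [SFinite P]
    (hf_meas : Measurable (fun p : (Fin d → ℝ) × (Fin D → ℝ) => f p.1 p.2)) :
    StronglyMeasurable (Function.uncurry (Upot P f)) :=
  ((hf_meas.comp (measurable_snd.fst.prodMk measurable_fst.fst)).mul
    (hf_meas.comp (measurable_snd.fst.prodMk measurable_fst.snd))
    ).stronglyMeasurable.integral_prod_right'

variable [IsProbabilityMeasure P]

theorem abs_Vpot_le (hf_bdd : ∀ x θ, |f x θ| ≤ C)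
    (hy : Integrable (fun p : (Fin d → ℝ) × ℝ => p.2 ^ 2) P) (θ : Fin D → ℝ) :
    |Vpot P f θ| ≤ C * ∫ p, |p.2| ∂P := by
  have hy_int : Integrable (fun p : (Fin d → ℝ) × ℝ => |p.2|) P :=
    (((memLp_two_iff_integrable_sq measurable_snd.aestronglyMeasurable).2 hy).integrable
      one_le_two).abs
  rw [Vpot, abs_neg, ← integral_const_mul]
  refine (abs_integral_le_integral_abs).trans (integral_mono_of_nonneg
    (ae_of_all _ fun _ => abs_nonneg _) (hy_int.const_mul C) (ae_of_all _ fun p => ?_))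
  dsimp only
  rw [abs_mul, mul_comm]
  exact mul_le_mul_of_nonneg_right (hf_bdd p.1 θ) (abs_nonneg _)

theorem abs_Upot_le (hf_bdd : ∀ x θ, |f x θ| ≤ C) (θ θ' : Fin D → ℝ) :
    |Upot P f θ θ'| ≤ C ^ 2 := by
  simpa [Upot] using norm_integral_le_of_norm_le_const (μ := P)
    (f := fun p => f p.1 θ * f p.1 θ') (ae_of_all _ fun p => by
    rw [Real.norm_eq_abs, abs_mul, sq]
    exact mul_le_mul (hf_bdd p.1 θ) (hf_bdd p.1 θ') (abs_nonneg _)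
      ((abs_nonneg _).trans (hf_bdd p.1 θ)))

section FiniteMeasure

variable (ρ : Measure (Fin D → ℝ)) [IsFiniteMeasure ρ]

theorem integrable_Vpot (hf_bdd : ∀ x θ, |f x θ| ≤ C)
    (hf_meas : Measurable (fun p : (Fin d → ℝ) × (Fin D → ℝ) => f p.1 p.2))
    (hy : Integrable (fun p : (Fin d → ℝ) × ℝ => p.2 ^ 2) P) :
    Integrable (Vpot P f) ρ :=
  .of_bound (stronglyMeasurable_Vpot P f hf_meas).aestronglyMeasurable _
    (ae_of_all _ (abs_Vpot_le P f hf_bdd hy))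

theorem integrable_uncurry_Upot (hf_bdd : ∀ x θ, |f x θ| ≤ C)
    (hf_meas : Measurable (fun p : (Fin d → ℝ) × (Fin D → ℝ) => f p.1 p.2)) :
    Integrable (Function.uncurry (Upot P f)) (ρ.prod ρ) :=
  .of_bound (stronglyMeasurable_uncurry_Upot P f hf_meas).aestronglyMeasurable _
    (ae_of_all _ fun q => abs_Upot_le P f hf_bdd q.1 q.2)

theorem integrable_Upot_self (hf_bdd : ∀ x θ, |f x θ| ≤ C)
    (hf_meas : Measurable (fun p : (Fin d → ℝ) × (Fin D → ℝ) => f p.1 p.2)) :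
    Integrable (fun θ => Upot P f θ θ) ρ :=
  .of_bound ((stronglyMeasurable_uncurry_Upot P f hf_meas).comp_measurable
    (measurable_id.prodMk measurable_id)).aestronglyMeasurable _
    (ae_of_all _ fun θ => abs_Upot_le P f hf_bdd θ θ)

theorem integral_integral_Upot_nonneg (hf_bdd : ∀ x θ, |f x θ| ≤ C)
    (hf_meas : Measurable (fun p : (Fin d → ℝ) × (Fin D → ℝ) => f p.1 p.2)) :
    0 ≤ ∫ θ, ∫ θ', Upot P f θ θ' ∂ρ ∂ρ := by
  have hg : Measurable (Function.uncurry fun (θ : Fin D → ℝ) (p : (Fin d → ℝ) × ℝ) => f p.1 θ) :=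
    hf_meas.comp (measurable_snd.fst.prodMk measurable_fst)
  unfold Upot
  rw [integral_integral_integral_mul_eq_integral_sq hg fun θ p => hf_bdd p.1 θ]
  exact integral_nonneg fun _ => sq_nonneg _

end FiniteMeasure

theorem Rhash_sub_le_Risk (hf_bdd : ∀ x θ, |f x θ| ≤ C)
    (hf_meas : Measurable (fun p : (Fin d → ℝ) × (Fin D → ℝ) => f p.1 p.2))
    (hy : Integrable (fun p : (Fin d → ℝ) × ℝ => p.2 ^ 2) P)
    (ρ : Measure (Fin D → ℝ)) [IsProbabilityMeasure ρ] :
    Rhash P - 2 * (C * ∫ p, |p.2| ∂P) ≤ Risk P f ρ := by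
  have hV : |∫ θ, Vpot P f θ ∂ρ| ≤ C * ∫ p, |p.2| ∂P := by
    simpa using norm_integral_le_of_norm_le_const (μ := ρ) (f := Vpot P f)
      (ae_of_all _ (abs_Vpot_le P f hf_bdd hy))
  have hU := integral_integral_Upot_nonneg P f ρ hf_bdd hf_meas
  rw [Risk]
  linarith [neg_abs_le (∫ θ, Vpot P f θ ∂ρ)]

theorem iInf_Risk_le_RiskN {N : ℕ} [NeZero N] (hf_bdd : ∀ x θ, |f x θ| ≤ C)
    (hf_meas : Measurable (fun p : (Fin d → ℝ) × (Fin D → ℝ) => f p.1 p.2))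
    (hy : Integrable (fun p : (Fin d → ℝ) × ℝ => p.2 ^ 2) P) (θ : Fin N → Fin D → ℝ) :
    ⨅ ρ : {ρ : Measure (Fin D → ℝ) // IsProbabilityMeasure ρ}, Risk P f ρ.1 ≤ RiskN P f N θ := by
  have hbdd : BddBelow (Set.range fun ρ : {ρ : Measure (Fin D → ℝ) //
      IsProbabilityMeasure ρ} => Risk P f ρ.1) :=
    ⟨_, Set.forall_mem_range.2 fun ρ => have := ρ.2; Rhash_sub_le_Risk P f hf_bdd hf_meas hy ρ.1⟩
  rw [RiskN_eq_Risk_empiricalMeasure]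
  exact ciInf_le hbdd ⟨empiricalMeasure θ, inferInstance⟩

variable {N : ℕ} (ρ : Measure (Fin D → ℝ)) [IsProbabilityMeasure ρ]

theorem integrable_RiskN_pi (hf_bdd : ∀ x θ, |f x θ| ≤ C)
    (hf_meas : Measurable (fun p : (Fin d → ℝ) × (Fin D → ℝ) => f p.1 p.2))
    (hy : Integrable (fun p : (Fin d → ℝ) × ℝ => p.2 ^ 2) P) :
    Integrable (RiskN P f N) (Measure.pi fun _ => ρ) := by
  have hV := integrable_comp_eval (integrable_Vpot P f ρ hf_bdd hf_meas hy) (ι := Fin N)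
  have hU := integrable_comp_eval_pair (integrable_uncurry_Upot P f ρ hf_bdd hf_meas)
    (integrable_Upot_self P f ρ hf_bdd hf_meas) (ι := Fin N)
  exact ((integrable_const _).add ((integrable_finsetSum _ fun i _ => hV i).const_mul _)).add
    ((integrable_finsetSum _ fun i _ => integrable_finsetSum _ fun j _ => hU i j).const_mul _)

theorem integral_RiskN_pi [NeZero N] (hf_bdd : ∀ x θ, |f x θ| ≤ C)
    (hf_meas : Measurable (fun p : (Fin d → ℝ) × (Fin D → ℝ) => f p.1 p.2))
    (hy : Integrable (fun p : (Fin d → ℝ) × ℝ => p.2 ^ 2) P) :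
    ∫ θ, RiskN P f N θ ∂(Measure.pi fun _ => ρ)
      = Risk P f ρ + (∫ θ, Upot P f θ θ ∂ρ - ∫ θ, ∫ θ', Upot P f θ θ' ∂ρ ∂ρ) / N := by
  have hV := integrable_Vpot P f ρ hf_bdd hf_meas hy
  have hU := integrable_uncurry_Upot P f ρ hf_bdd hf_meas
  have hUself := integrable_Upot_self P f ρ hf_bdd hf_meas
  have hVsum := integrable_finsetSum (μ := Measure.pi fun _ => ρ) Finset.univ
    fun i _ => integrable_comp_eval hV (ι := Fin N) i
  have hUsum := integrable_finsetSum (μ := Measure.pi fun _ => ρ) Finset.univ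
    fun i _ => integrable_finsetSum Finset.univ fun j _ =>
      integrable_comp_eval_pair hU hUself (ι := Fin N) i j
  simp only [RiskN]
  rw [integral_add (f := fun θ => Rhash P + 2 / (N : ℝ) * ∑ i, Vpot P f (θ i))
      ((integrable_const _).add (hVsum.const_mul _)) (hUsum.const_mul _),
    integral_add (integrable_const _) (hVsum.const_mul _), integral_const, integral_const_mul,
    integral_const_mul, integral_sum_comp_eval hV, integral_sum_sum_comp_eval_pair hU hUself]
  have hN : (N : ℝ) ≠ 0 := Nat.cast_ne_zero.mpr (NeZero.ne N)
  simp only [Risk, Fintype.card_fin, probReal_univ, one_smul]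
  field_simp
  ring

theorem exists_RiskN_le [NeZero N] (hf_bdd : ∀ x θ, |f x θ| ≤ C)
    (hf_meas : Measurable (fun p : (Fin d → ℝ) × (Fin D → ℝ) => f p.1 p.2))
    (hy : Integrable (fun p : (Fin d → ℝ) × ℝ => p.2 ^ 2) P) {K : ℝ}
    (hK : ∫ θ, Upot P f θ θ ∂ρ ≤ K) :
    ∃ θ : Fin N → Fin D → ℝ, RiskN P f N θ ≤ Risk P f ρ + K / N := by
  obtain ⟨θ, hθ⟩ := exists_le_integral (integrable_RiskN_pi P f ρ hf_bdd hf_meas hy)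
  refine ⟨θ, hθ.trans ?_⟩
  rw [integral_RiskN_pi P f ρ hf_bdd hf_meas hy]
  have := integral_integral_Upot_nonneg P f ρ hf_bdd hf_meas
  gcongr
  linarith

end Risk


/-- Proposition 1: under condition (a) or (b), the infimum of the finite-`N` risk
is within `K/N` of the infimum of the asymptotic risk. -/
theorem finite_N_risk_infimum_close
    (d D N : ℕ) (hN : 0 < N)
    (P : Measure ((Fin d → ℝ) × ℝ)) [IsProbabilityMeasure P]
    (f : (Fin d → ℝ) → (Fin D → ℝ) → ℝ)
    (hf_bdd : ∃ C, ∀ x θ, |f x θ| ≤ C)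
    (hf_meas : Measurable (fun p : (Fin d → ℝ) × (Fin D → ℝ) => f p.1 p.2))
    (hy : Integrable (fun p : (Fin d → ℝ) × ℝ => p.2 ^ 2) P)
    (K : ℝ)
    (h : (∃ ρstar : Measure (Fin D → ℝ), IsProbabilityMeasure ρstar ∧
            Risk P f ρstar
              = ⨅ ρ : {ρ : Measure (Fin D → ℝ) // IsProbabilityMeasure ρ}, Risk P f ρ.1 ∧
            ∫ θ, Upot P f θ θ ∂ρstar ≤ K)
        ∨ (∃ ε₀ > (0 : ℝ), ∀ ρ : Measure (Fin D → ℝ), IsProbabilityMeasure ρ →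
            Risk P f ρ
              ≤ (⨅ ρ' : {ρ' : Measure (Fin D → ℝ) // IsProbabilityMeasure ρ'}, Risk P f ρ'.1) + ε₀ →
            ∫ θ, Upot P f θ θ ∂ρ ≤ K)) :
    |(⨅ θ : Fin N → Fin D → ℝ, RiskN P f N θ)
      - ⨅ ρ : {ρ : Measure (Fin D → ℝ) // IsProbabilityMeasure ρ}, Risk P f ρ.1| ≤ K / N := by
  obtain ⟨C, hf_bdd⟩ := hf_bdd
  have : NeZero N := ⟨hN.ne'⟩
  have : Nonempty {ρ : Measure (Fin D → ℝ) // IsProbabilityMeasure ρ} :=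
    ⟨⟨Measure.dirac 0, inferInstance⟩⟩
  have hRisk_le_RiskN := iInf_Risk_le_RiskN (N := N) P f hf_bdd hf_meas hy
  have hRiskN_bdd : BddBelow (Set.range (RiskN P f N)) :=
    ⟨_, Set.forall_mem_range.2 hRisk_le_RiskN⟩
  have hnear {ε : ℝ} (hε : 0 < ε) := exists_le_ciInf_add_of_minimizer_or_sublevel
    (F := fun ρ : {ρ : Measure (Fin D → ℝ) // IsProbabilityMeasure ρ} => Risk P f ρ.1)
    (Q := fun ρ => ∫ θ, Upot P f θ θ ∂ρ.1 ≤ K) (by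
      rcases h with ⟨ρ, hρ, hmin, hK⟩ | ⟨ε₀, hε₀, hsub⟩
      exacts [.inl ⟨⟨ρ, hρ⟩, hmin, hK⟩, .inr ⟨ε₀, hε₀, fun ρ => hsub ρ.1 ρ.2⟩]) hε
  have hK : 0 ≤ K := by
    obtain ⟨ρ, hρK, -⟩ := hnear one_pos
    exact (integral_nonneg (Upot_self_nonneg P f)).trans hρK
  have hup (ε : ℝ) (hε : 0 < ε) : ⨅ θ, RiskN P f N θ
      ≤ (⨅ ρ : {ρ : Measure (Fin D → ℝ) // IsProbabilityMeasure ρ}, Risk P f ρ.1) + K / N + ε := by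
    obtain ⟨ρ, hρK, hρε⟩ := hnear hε
    have := ρ.2
    obtain ⟨θ, hθ⟩ := exists_RiskN_le (N := N) P f ρ.1 hf_bdd hf_meas hy hρK
    linarith [ciInf_le hRiskN_bdd θ]
  rw [abs_le]
  constructor
  · linarith [le_ciInf hRisk_le_RiskN, div_nonneg hK (Nat.cast_nonneg N)]
  · linarith [le_of_forall_pos_le_add hup]
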